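/- Let μ be a Borel probability measure on ℝ with ∫ y dμ = 0 and V = ∫ y² dμ < ∞, let γ ∈ (0,1), δ = 1 − γ. Then for all natural numbers h ≥ 1, q ≥ 2, and every x ∈ ℝ, ∫∫∫∫ (y₁ − δy₀)(y₃ − δy₂) K_1(y₂, dy₃) K_{h−1}(y₁, dy₂) K_1(y₀, dy₁) K_{q−1}(x, dy₀) = 0. That is, the conditional expectation E(η_i η_{i+h} | m̄_{i−q} = x) of the product of two moving-average innovations η_i = m̄_i − δ m̄_{i−1} at distinct times vanishes identically. -/

import Mathlib

open MeasureTheory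

/-- The `h`-step renewal kernel of one MSMD multiplier with renewal distribution `μ` and
switching probability `γ`: `K_h(x, ·) = (1 - (1-γ)^h)·μ + (1-γ)^h·δ_x`
(so `K_0(x, ·)` is the point mass at `x`). -/
noncomputable def renewalKernel (μ : Measure ℝ) (γ : ℝ) (h : ℕ) (x : ℝ) : Measure ℝ :=
  ENNReal.ofReal (1 - (1 - γ) ^ h) • μ + ENNReal.ofReal ((1 - γ) ^ h) • Measure.dirac x

/-! The innermost integral already vanishes for every `y₂`, because the renewal chain is
mean-reverting: one step from `y₂` has conditional mean `γ·∫ y dμ + (1 - γ)·y₂ = δ·y₂`.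
So the innovation `y₃ - δ y₂` has conditional mean zero, whatever the factor `y₁ - δ y₀`. -/

theorem integral_renewalKernel {μ : Measure ℝ} {γ : ℝ} (hγ : γ ∈ Set.Icc (0 : ℝ) 1)
    (h : ℕ) (x : ℝ) {f : ℝ → ℝ} (hf : Integrable f μ) :
    ∫ y, f y ∂(renewalKernel μ γ h x) =
      (1 - (1 - γ) ^ h) * ∫ y, f y ∂μ + (1 - γ) ^ h * f x := by
  have hpow_nonneg : 0 ≤ (1 - γ) ^ h := pow_nonneg (by linarith [hγ.2]) h
  have hpow_le_one : (1 - γ) ^ h ≤ 1 := pow_le_one₀ (by linarith [hγ.2]) (by linarith [hγ.1])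
  have hf_dirac : Integrable f (Measure.dirac x) := integrable_dirac enorm_lt_top
  rw [renewalKernel, integral_add_measure (hf.smul_measure ENNReal.ofReal_ne_top)
      (hf_dirac.smul_measure ENNReal.ofReal_ne_top), integral_smul_measure,
    integral_smul_measure, integral_dirac, ENNReal.toReal_ofReal (by linarith),
    ENNReal.toReal_ofReal hpow_nonneg, smul_eq_mul, smul_eq_mul]

theorem integral_sub_renewalKernel_one {μ : Measure ℝ} [IsProbabilityMeasure μ]
    (hint : Integrable (fun y : ℝ => y) μ) (hmean : ∫ y, y ∂μ = 0)
    {γ : ℝ} (hγ : γ ∈ Set.Icc (0 : ℝ) 1) (x : ℝ) :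
    ∫ y, (y - (1 - γ) * x) ∂(renewalKernel μ γ 1 x) = 0 := by
  rw [integral_renewalKernel (f := fun y => y - (1 - γ) * x) hγ 1 x
      (hint.sub (integrable_const _)),
    integral_sub hint (integrable_const _), hmean, integral_const, probReal_univ]
  simp only [one_smul, pow_one]
  ring

theorem innovation_conditional_product_zero_general
    (μ : Measure ℝ) [IsProbabilityMeasure μ]
    (hmean : ∫ y, y ∂μ = 0) (hmom : Integrable (fun y : ℝ => y ^ 2) μ)
    (γ : ℝ) (hγ : γ ∈ Set.Ioo (0 : ℝ) 1) (δ : ℝ) (hδ : δ = 1 - γ)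
    (h q : ℕ) (x : ℝ) :
    ∫ y₀, (∫ y₁, (∫ y₂, (∫ y₃, (y₁ - δ * y₀) * (y₃ - δ * y₂)
        ∂(renewalKernel μ γ 1 y₂))
      ∂(renewalKernel μ γ (h - 1) y₁))
      ∂(renewalKernel μ γ 1 y₀))
      ∂(renewalKernel μ γ (q - 1) x) = 0 := by
  have hint : Integrable (fun y : ℝ => y) μ :=
    ((memLp_two_iff_integrable_sq aestronglyMeasurable_id).2 hmom).integrable one_le_two
  have hinner (c y₂ : ℝ) : ∫ y₃, c * (y₃ - δ * y₂) ∂(renewalKernel μ γ 1 y₂) = 0 := by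
    rw [integral_const_mul, hδ,
      integral_sub_renewalKernel_one hint hmean (Set.Ioo_subset_Icc_self hγ), mul_zero]
  simp only [hinner, integral_zero]

/-- the conditional expectation `E(η_i η_{i+h} | m̄_{i−q} = x)` of the product
of two moving-average innovations `η_i = m̄_i − δ m̄_{i−1}` at distinct times vanishes:
for `h ≥ 1`, `q ≥ 2` and every `x`,
`∫∫∫∫ (y₁ − δy₀)(y₃ − δy₂) K_1(y₂,dy₃) K_{h−1}(y₁,dy₂) K_1(y₀,dy₁) K_{q−1}(x,dy₀) = 0`. -/
theorem innovation_conditional_product_zero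
    (μ : Measure ℝ) [IsProbabilityMeasure μ]
    (hmean : ∫ y, y ∂μ = 0) (hmom : Integrable (fun y : ℝ => y ^ 2) μ)
    (γ : ℝ) (hγ : γ ∈ Set.Ioo (0 : ℝ) 1) (δ : ℝ) (hδ : δ = 1 - γ)
    (h q : ℕ) (hh : 1 ≤ h) (hq : 2 ≤ q) (x : ℝ) :
    ∫ y₀, (∫ y₁, (∫ y₂, (∫ y₃, (y₁ - δ * y₀) * (y₃ - δ * y₂)
        ∂(renewalKernel μ γ 1 y₂))
      ∂(renewalKernel μ γ (h - 1) y₁))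
      ∂(renewalKernel μ γ 1 y₀))
      ∂(renewalKernel μ γ (q - 1) x) = 0 :=
  innovation_conditional_product_zero_general μ hmean hmom γ hγ δ hδ h q x
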